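/- Let Ω ⊂ ℂⁿ be a bounded domain with defining function r satisfying -r(z) ≍ dist(z, Ωᶜ) uniformly on Ω. Then the lifted domain Ω̃ = {(z,w) ∈ ℂ^{n+k} : r̃(z,w) := r(z)+|w|² < 0} satisfies -r̃(z,w) ≍ dist((z,w), Ω̃ᶜ) uniformly on Ω̃; that is, there exist constants c₁, c₂ > 0 such that c₁·dist((z,w), Ω̃ᶜ) ≤ -(r(z)+|w|²) ≤ c₂·dist((z,w), Ω̃ᶜ) for all (z,w) ∈ Ω̃. -/

import Mathlib

open MeasureTheory Metric Set Filter
open scoped ENNReal Topology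

noncomputable section

lemma aux_fderiv_bound {E F : Type*} [NormedAddCommGroup E] [NormedSpace ℝ E] [ProperSpace E]
    [NormedAddCommGroup F] [NormedSpace ℝ F]
    {f : E → F} (hf : ContDiff ℝ (⊤ : ℕ∞) f) (ρ : ℝ) :
    ∃ L, 0 ≤ L ∧ ∀ x ∈ Metric.closedBall (0:E) ρ, ∀ y ∈ Metric.closedBall (0:E) ρ,
      ‖f y - f x‖ ≤ L * ‖y - x‖ := by
  obtain ⟨C, hC⟩ := (isCompact_closedBall (0:E) ρ).exists_bound_of_continuousOn
    ((hf.fderiv_right (m := (⊤ : ℕ∞)) (by simp)).continuous.norm).continuousOn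
  refine ⟨max C 0, le_max_right _ _, fun x hx y hy => ?_⟩
  refine (convex_closedBall (0:E) ρ).norm_image_sub_le_of_norm_fderiv_le
    (fun p _ => (hf.differentiable (by simp)).differentiableAt) (fun p hp => ?_) hx hy
  calc ‖fderiv ℝ f p‖ ≤ C := by simpa using hC p hp
    _ ≤ max C 0 := le_max_left _ _

lemma aux_taylor {E : Type*} [NormedAddCommGroup E] [NormedSpace ℝ E] [ProperSpace E]
    {f : E → ℝ} (hf : ContDiff ℝ (⊤ : ℕ∞) f) (ρ : ℝ) :
    ∃ L, 0 ≤ L ∧ ∀ x ∈ Metric.closedBall (0:E) ρ, ∀ y ∈ Metric.closedBall (0:E) ρ,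
      ‖f y - f x - fderiv ℝ f x (y - x)‖ ≤ L * ‖y - x‖^2 := by
  obtain ⟨L, hL0, hL⟩ := aux_fderiv_bound (hf.fderiv_right (m := (⊤ : ℕ∞)) (by simp)) ρ
  refine ⟨L, hL0, fun x hx y hy => ?_⟩
  set ℓ := fderiv ℝ f x with hℓ
  have hdiff : ∀ p, DifferentiableAt ℝ (fun q => f q - ℓ q) p :=
    fun p => ((hf.differentiable (by simp)).differentiableAt).sub (ℓ.differentiableAt)
  have hfd : ∀ p, fderiv ℝ (fun q => f q - ℓ q) p = fderiv ℝ f p - ℓ := by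
    intro p
    rw [fderiv_fun_sub ((hf.differentiable (by simp)).differentiableAt) ℓ.differentiableAt,
      ℓ.fderiv]
  have hconv : Convex ℝ (Metric.closedBall (0:E) ρ ∩ Metric.closedBall x ‖y - x‖) :=
    (convex_closedBall _ _).inter (convex_closedBall _ _)
  have hxmem : x ∈ Metric.closedBall (0:E) ρ ∩ Metric.closedBall x ‖y - x‖ :=
    ⟨hx, Metric.mem_closedBall_self (norm_nonneg _)⟩
  have hymem : y ∈ Metric.closedBall (0:E) ρ ∩ Metric.closedBall x ‖y - x‖ :=
    ⟨hy, by simp [Metric.mem_closedBall, dist_eq_norm]⟩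
  have key := hconv.norm_image_sub_le_of_norm_fderiv_le
    (fun p _ => hdiff p) (C := L * ‖y - x‖) (fun p hp => ?_) hxmem hymem
  · have : f y - ℓ y - (f x - ℓ x) = f y - f x - ℓ (y - x) := by
      rw [map_sub]; ring
    rw [this] at key
    calc ‖f y - f x - ℓ (y - x)‖ ≤ L * ‖y - x‖ * ‖y - x‖ := key
      _ = L * ‖y - x‖ ^ 2 := by ring
  · rw [hfd p]
    calc ‖fderiv ℝ f p - ℓ‖ ≤ L * ‖p - x‖ := hL x hx p hp.1
      _ ≤ L * ‖y - x‖ := by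
          refine mul_le_mul_of_nonneg_left ?_ hL0
          simpa [dist_eq_norm] using hp.2

set_option maxHeartbeats 1000000 in
/-- if `-r(z) ≍ dist(z, Ωᶜ)` on `Ω = {r < 0}`, then the lifted defining
function `r̃(z,w) = r(z) + ‖w‖²` satisfies `-r̃ ≍ dist(·, Ω̃ᶜ)` on the lift `Ω̃`. -/
theorem lifted_defining_function_comparable (n k : ℕ)
    (r : EuclideanSpace ℂ (Fin n) → ℝ)
    (hr : ContDiff ℝ (⊤ : ℕ∞) r)
    (hbd : Bornology.IsBounded {z | r z < 0})
    (hne : {z | r z < 0}.Nonempty)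
    (hgrad : ∀ z ∈ frontier {z | r z < 0}, fderiv ℝ r z ≠ 0)
    (a₁ a₂ : ℝ) (ha₁ : 0 < a₁) (ha₂ : 0 < a₂)
    (hcomp : ∀ z ∈ {z | r z < 0},
      a₁ * Metric.infDist z {z | r z < 0}ᶜ ≤ -r z ∧
      -r z ≤ a₂ * Metric.infDist z {z | r z < 0}ᶜ) :
    ∃ c₁ c₂ : ℝ, 0 < c₁ ∧ 0 < c₂ ∧
      ∀ q ∈ {q : EuclideanSpace ℂ (Fin n) × EuclideanSpace ℂ (Fin k) |
          r q.1 + ‖q.2‖ ^ 2 < 0},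
        c₁ * Metric.infDist q {q : EuclideanSpace ℂ (Fin n) × EuclideanSpace ℂ (Fin k) |
            r q.1 + ‖q.2‖ ^ 2 < 0}ᶜ ≤ -(r q.1 + ‖q.2‖ ^ 2) ∧
        -(r q.1 + ‖q.2‖ ^ 2) ≤ c₂ * Metric.infDist q
            {q : EuclideanSpace ℂ (Fin n) × EuclideanSpace ℂ (Fin k) |
              r q.1 + ‖q.2‖ ^ 2 < 0}ᶜ := by
  classical
  set Om : Set (EuclideanSpace ℂ (Fin n)) := {z | r z < 0} with hOm
  set Omt : Set (EuclideanSpace ℂ (Fin n) × EuclideanSpace ℂ (Fin k)) :=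
    {q | r q.1 + ‖q.2‖ ^ 2 < 0} with hOmt
  -- Ωᶜ is nonempty
  have hOcne : Omᶜ.Nonempty := by
    rcases eq_empty_or_nonempty Omᶜ with h | h
    · obtain ⟨z0, hz0⟩ := hne
      have h2 := (hcomp z0 hz0).2
      rw [h, Metric.infDist_empty] at h2
      have hz0' : r z0 < 0 := hz0
      have h3 : (0:ℝ) < -r z0 := by linarith
      simp only [mul_zero] at h2
      linarith
    · exact h
  obtain ⟨z₀', hz₀'⟩ := hOcne
  have hOne_univ : Om ≠ univ := by
    intro h
    rw [h, compl_univ] at hz₀'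
    exact hz₀'
  -- bounding radius
  obtain ⟨R, hR0, hRsub⟩ := hbd.subset_closedBall_lt 0 0
  have hnormR : ∀ z ∈ Om, ‖z‖ ≤ R := fun z hz => by
    simpa [mem_closedBall_zero_iff] using hRsub hz
  obtain ⟨D, hD⟩ : ∃ x : ℝ, x = R + ‖z₀'‖ + 1 := ⟨_, rfl⟩
  have hD0 : 0 < D := by rw [hD]; positivity
  have hdistD : ∀ z ∈ Om, Metric.infDist z Omᶜ ≤ D := by
    intro z hz
    refine (Metric.infDist_le_dist_of_mem hz₀').trans ?_
    calc dist z z₀' = ‖z - z₀'‖ := dist_eq_norm _ _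
      _ ≤ ‖z‖ + ‖z₀'‖ := norm_sub_le _ _
      _ ≤ D := by rw [hD]; have := hnormR z hz; linarith
  obtain ⟨M, hM⟩ : ∃ x : ℝ, x = a₂ * D := ⟨_, rfl⟩
  have hM0 : 0 < M := by rw [hM]; positivity
  have hρle : ∀ z ∈ Om, -r z ≤ M := fun z hz =>
    le_trans (hcomp z hz).2 (by rw [hM]; exact mul_le_mul_of_nonneg_left (hdistD z hz) ha₂.le)
  -- the frontier
  set F := frontier Om with hF
  have hFne : F.Nonempty := nonempty_frontier_iff.mpr ⟨hne, hOne_univ⟩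
  have hFcp : IsCompact F :=
    Metric.isCompact_of_isClosed_isBounded isClosed_frontier
      (hbd.closure.subset frontier_subset_closure)
  have hgc : Continuous fun z => ‖fderiv ℝ r z‖ :=
    (hr.fderiv_right (m := (⊤ : ℕ∞)) (by simp)).continuous.norm
  obtain ⟨zm, hzmF, hzm⟩ := hFcp.exists_isMinOn hFne hgc.continuousOn
  obtain ⟨m, hm⟩ : ∃ x : ℝ, x = ‖fderiv ℝ r zm‖ / 2 := ⟨_, rfl⟩
  have hm0 : 0 < m := by
    have := norm_pos_iff.mpr (hgrad zm hzmF)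
    rw [hm]; positivity
  have hUopen : IsOpen {z | m < ‖fderiv ℝ r z‖} := isOpen_lt continuous_const hgc
  have hFU : F ⊆ {z | m < ‖fderiv ℝ r z‖} := by
    intro z hz
    have h1 : ‖fderiv ℝ r zm‖ ≤ ‖fderiv ℝ r z‖ := hzm hz
    have h2 : (0:ℝ) < ‖fderiv ℝ r zm‖ := norm_pos_iff.mpr (hgrad zm hzmF)
    simp only [mem_setOf_eq]
    rw [hm]
    linarith
  obtain ⟨η, hη0, hηsub⟩ := hFcp.exists_cthickening_subset_open hUopen hFU
  -- Lipschitz and Taylor constants on the ball of radius R + 2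
  obtain ⟨L₁, hL₁0, hL₁⟩ := aux_fderiv_bound hr (R + 2)
  obtain ⟨L₂', hL₂'0, hL₂'⟩ := aux_taylor hr (R + 2)
  obtain ⟨L₂, hL₂def⟩ : ∃ x : ℝ, x = L₂' + 1 := ⟨_, rfl⟩
  have hL₂0 : 0 < L₂ := by rw [hL₂def]; positivity
  have hL₂ : ∀ x ∈ Metric.closedBall (0:EuclideanSpace ℂ (Fin n)) (R+2),
      ∀ y ∈ Metric.closedBall (0:EuclideanSpace ℂ (Fin n)) (R+2),
      ‖r y - r x - fderiv ℝ r x (y - x)‖ ≤ L₂ * ‖y - x‖^2 := by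
    intro x hx y hy
    refine (hL₂' x hx y hy).trans ?_
    have h9 : (0:ℝ) ≤ ‖y - x‖^2 := sq_nonneg _
    rw [hL₂def]
    nlinarith [h9, hL₂'0]
  -- threshold
  obtain ⟨ρ₀, hρ₀def⟩ : ∃ x : ℝ, x = min (a₁ * η) (min (m^2/(16*L₂)) (m/4)) := ⟨_, rfl⟩
  have hρ₀0 : 0 < ρ₀ := by
    rw [hρ₀def]
    refine lt_min (by positivity) (lt_min ?_ ?_)
    · exact div_pos (by positivity) (by positivity)
    · exact div_pos hm0 (by norm_num)
  obtain ⟨C, hCdef⟩ : ∃ x : ℝ, x = max (4/m) (max (Real.sqrt ρ₀)⁻¹ a₁⁻¹) := ⟨_, rfl⟩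
  have hC0 : 0 < C := by
    rw [hCdef]
    exact lt_of_lt_of_le (div_pos (by norm_num) hm0) (le_max_left _ _)
  -- the key lower estimate
  have hkey : ∀ q ∈ Omt, Metric.infDist q Omtᶜ ≤ C * (-(r q.1 + ‖q.2‖^2)) := by
    rintro ⟨z, w⟩ hq
    simp only [hOmt, mem_setOf_eq] at hq
    show Metric.infDist (z, w) Omtᶜ ≤ C * (-(r z + ‖w‖^2))
    have hzOm : z ∈ Om := by
      simp only [hOm, mem_setOf_eq]
      linarith [sq_nonneg ‖w‖]
    have hρpos : 0 < -r z := by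
      have : r z < 0 := hzOm
      linarith
    have hrtpos : 0 < -(r z + ‖w‖^2) := by linarith
    have hδz : Metric.infDist z Omᶜ ≤ (-r z)/a₁ := by
      have h := (hcomp z hzOm).1
      rw [le_div_iff₀ ha₁]
      linarith
    by_cases hcase : -r z ≤ ρ₀
    · -- near the boundary: move along an ascent direction of r
      obtain ⟨y, hyF, hyd⟩ := exists_mem_frontier_infDist_compl_eq_dist hzOm hOne_univ
      have hρ₀η : ρ₀ ≤ a₁ * η := by rw [hρ₀def]; exact min_le_left _ _
      have hzy : dist z y ≤ η := by
        rw [← hyd]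
        have h2 : (-r z)/a₁ ≤ η := by
          rw [div_le_iff₀ ha₁]
          calc -r z ≤ ρ₀ := hcase
            _ ≤ a₁ * η := hρ₀η
            _ = η * a₁ := mul_comm _ _
        linarith [hδz]
      have hzU : m < ‖fderiv ℝ r z‖ :=
        hηsub (Metric.mem_cthickening_of_dist_le z y η F hyF hzy)
      obtain ⟨u₀, hu₀n, hu₀⟩ := (fderiv ℝ r z).exists_lt_apply_of_lt_opNorm
        (show m/2 < ‖fderiv ℝ r z‖ by linarith)
      obtain ⟨u, hun, hfu⟩ : ∃ u : EuclideanSpace ℂ (Fin n), ‖u‖ ≤ 1 ∧ m/2 < fderiv ℝ r z u := by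
        rcases le_or_gt 0 (fderiv ℝ r z u₀) with h | h
        · exact ⟨u₀, hu₀n.le, by rwa [Real.norm_eq_abs, abs_of_nonneg h] at hu₀⟩
        · refine ⟨-u₀, by simpa using hu₀n.le, ?_⟩
          rw [map_neg]
          rw [Real.norm_eq_abs, abs_of_neg h] at hu₀
          linarith
      obtain ⟨t, htdef⟩ : ∃ x : ℝ, x = 4 * (-(r z + ‖w‖^2)) / m := ⟨_, rfl⟩
      have ht0 : 0 < t := by rw [htdef]; exact div_pos (by linarith) hm0
      have hrtρ : -(r z + ‖w‖^2) ≤ -r z := by linarith [sq_nonneg ‖w‖]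
      have hρ₀4 : ρ₀ ≤ m/4 := by rw [hρ₀def]; exact le_trans (min_le_right _ _) (min_le_right _ _)
      have htle : t ≤ 1 := by
        rw [htdef, div_le_one hm0]
        linarith
      have htu : ‖t • u‖ ≤ t := by
        rw [norm_smul, Real.norm_eq_abs, abs_of_pos ht0]
        exact mul_le_of_le_one_right ht0.le hun
      have hzB : z ∈ Metric.closedBall (0:EuclideanSpace ℂ (Fin n)) (R+2) := by
        rw [mem_closedBall_zero_iff]
        linarith [hnormR z hzOm]
      have hz'B : z + t • u ∈ Metric.closedBall (0:EuclideanSpace ℂ (Fin n)) (R+2) := by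
        rw [mem_closedBall_zero_iff]
        calc ‖z + t • u‖ ≤ ‖z‖ + ‖t • u‖ := norm_add_le _ _
          _ ≤ R + 2 := by linarith [hnormR z hzOm]
      have htaylor := hL₂ z hzB (z + t • u) hz'B
      rw [add_sub_cancel_left] at htaylor
      have hmap : fderiv ℝ r z (t • u) = t * fderiv ℝ r z u := by
        rw [(fderiv ℝ r z).map_smul, smul_eq_mul]
      have hlow : r z + t * (m/2) - L₂ * t^2 ≤ r (z + t • u) := by
        have habs : |r (z + t • u) - r z - t * fderiv ℝ r z u| ≤ L₂ * ‖t • u‖^2 := by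
          rw [← hmap, ← Real.norm_eq_abs]
          exact htaylor
        have h2 : L₂ * ‖t • u‖^2 ≤ L₂ * t^2 :=
          mul_le_mul_of_nonneg_left (pow_le_pow_left₀ (norm_nonneg _) htu 2) hL₂0.le
        have h3 : t * (m/2) ≤ t * fderiv ℝ r z u :=
          mul_le_mul_of_nonneg_left hfu.le ht0.le
        have h4 := (abs_le.mp habs).1
        linarith only [h2, h3, h4]
      have hval : t * (m/2) = 2 * (-(r z + ‖w‖^2)) := by
        rw [htdef]
        field_simp
        ring
      have hquad : L₂ * t^2 ≤ -(r z + ‖w‖^2) := by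
        have h1 : ρ₀ ≤ m^2/(16*L₂) := by rw [hρ₀def]; exact le_trans (min_le_right _ _) (min_le_left _ _)
        have h2 : -(r z + ‖w‖^2) ≤ m^2/(16*L₂) := le_trans (hrtρ.trans hcase) h1
        have h4 : -(r z + ‖w‖^2) * (16*L₂) ≤ m^2 := by
          rw [le_div_iff₀ (by positivity)] at h2
          linarith
        have ht2 : t^2 = 16 * (-(r z + ‖w‖^2))^2 / m^2 := by
          rw [htdef]
          field_simp
          ring
        have hrw : L₂ * t^2 = 16 * L₂ * (-(r z + ‖w‖^2))^2 / m^2 := by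
          rw [ht2]; ring
        rw [hrw, div_le_iff₀ (by positivity : (0:ℝ) < m^2)]
        linarith [mul_le_mul_of_nonneg_left h4 hrtpos.le]
      have hexit : ((z + t • u, w) : EuclideanSpace ℂ (Fin n) × EuclideanSpace ℂ (Fin k)) ∈ Omtᶜ := by
        simp only [hOmt, mem_compl_iff, mem_setOf_eq, not_lt]
        have h5 := hlow
        rw [hval] at h5
        linarith
      have hdq : dist ((z, w) : EuclideanSpace ℂ (Fin n) × EuclideanSpace ℂ (Fin k)) (z + t • u, w) ≤ t := by
        rw [Prod.dist_eq]
        simp only [dist_self]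
        rw [max_eq_left dist_nonneg]
        calc dist z (z + t • u) = ‖t • u‖ := by
              rw [dist_eq_norm]
              simp
          _ ≤ t := htu
      calc Metric.infDist ((z, w) : EuclideanSpace ℂ (Fin n) × EuclideanSpace ℂ (Fin k)) Omtᶜ
            ≤ dist ((z, w) : EuclideanSpace ℂ (Fin n) × EuclideanSpace ℂ (Fin k)) (z + t • u, w) :=
              Metric.infDist_le_dist_of_mem hexit
        _ ≤ t := hdq
        _ = (4/m) * (-(r z + ‖w‖^2)) := by rw [htdef]; ring
        _ ≤ C * (-(r z + ‖w‖^2)) := by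
            refine mul_le_mul_of_nonneg_right ?_ hrtpos.le
            rw [hCdef]; exact le_max_left _ _
    · -- far from the boundary
      push_neg at hcase
      have hOcne2 : Omᶜ.Nonempty := ⟨z₀', hz₀'⟩
      by_cases hw0 : w = 0
      · subst hw0
        have hXle : Metric.infDist ((z, (0 : EuclideanSpace ℂ (Fin k))) :
            EuclideanSpace ℂ (Fin n) × EuclideanSpace ℂ (Fin k)) Omtᶜ ≤ Metric.infDist z Omᶜ := by
          by_contra hlt
          push_neg at hlt
          obtain ⟨z', hz', hdz'⟩ := (Metric.infDist_lt_iff hOcne2).mp hlt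
          have hmem : ((z', (0 : EuclideanSpace ℂ (Fin k))) :
              EuclideanSpace ℂ (Fin n) × EuclideanSpace ℂ (Fin k)) ∈ Omtᶜ := by
            simp only [hOmt, mem_compl_iff, mem_setOf_eq, not_lt, norm_zero]
            have h6 : ¬ r z' < 0 := hz'
            have h7 : 0 ≤ r z' := not_lt.mp h6
            simpa using h7
          have h7 := Metric.infDist_le_dist_of_mem
            (x := ((z, (0 : EuclideanSpace ℂ (Fin k))) :
              EuclideanSpace ℂ (Fin n) × EuclideanSpace ℂ (Fin k))) hmem
          rw [Prod.dist_eq] at h7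
          simp only [dist_self] at h7
          rw [max_eq_left dist_nonneg] at h7
          linarith
        have hn0 : ‖(0 : EuclideanSpace ℂ (Fin k))‖ = 0 := norm_zero
        calc Metric.infDist ((z, (0 : EuclideanSpace ℂ (Fin k))) :
              EuclideanSpace ℂ (Fin n) × EuclideanSpace ℂ (Fin k)) Omtᶜ
            ≤ Metric.infDist z Omᶜ := hXle
          _ ≤ (-r z)/a₁ := hδz
          _ = a₁⁻¹ * (-(r z + ‖(0 : EuclideanSpace ℂ (Fin k))‖^2)) := by
              rw [hn0]; ring
          _ ≤ C * (-(r z + ‖(0 : EuclideanSpace ℂ (Fin k))‖^2)) := by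
              refine mul_le_mul_of_nonneg_right ?_ hrtpos.le
              rw [hCdef]; exact le_trans (le_max_right _ _) (le_max_right _ _)
      · have hs0 : 0 < ‖w‖ := norm_pos_iff.mpr hw0
        have hsρ : ‖w‖ < Real.sqrt (-r z) :=
          Real.lt_sqrt_of_sq_lt (by linarith : ‖w‖^2 < -r z)
        set w' := (Real.sqrt (-r z) / ‖w‖) • w with hw'def
        have hw'norm : ‖w'‖ = Real.sqrt (-r z) := by
          rw [hw'def, norm_smul, Real.norm_eq_abs, abs_of_nonneg (by positivity)]
          field_simp
        have hexit : ((z, w') : EuclideanSpace ℂ (Fin n) × EuclideanSpace ℂ (Fin k)) ∈ Omtᶜ := by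
          simp only [hOmt, mem_compl_iff, mem_setOf_eq, not_lt]
          rw [hw'norm, Real.sq_sqrt (by linarith : (0:ℝ) ≤ -r z)]
          linarith
        have h1q : (1:ℝ) ≤ Real.sqrt (-r z)/‖w‖ := by
          rw [le_div_iff₀ hs0]
          linarith
        have hdist : dist ((z, w) : EuclideanSpace ℂ (Fin n) × EuclideanSpace ℂ (Fin k)) (z, w')
            = Real.sqrt (-r z) - ‖w‖ := by
          rw [Prod.dist_eq]
          simp only [dist_self]
          rw [max_eq_right dist_nonneg, dist_eq_norm]
          have hsub : w - w' = (1 - Real.sqrt (-r z)/‖w‖) • w := by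
            rw [hw'def, sub_smul, one_smul]
          rw [hsub, norm_smul, Real.norm_eq_abs, abs_of_nonpos (by linarith)]
          field_simp
          ring
        have hfar2 : Real.sqrt (-r z) - ‖w‖ ≤ (Real.sqrt ρ₀)⁻¹ * (-(r z + ‖w‖^2)) := by
          have hb0 : 0 < Real.sqrt ρ₀ := Real.sqrt_pos.mpr hρ₀0
          have hba : Real.sqrt ρ₀ ≤ Real.sqrt (-r z) := Real.sqrt_le_sqrt hcase.le
          have ha2 : Real.sqrt (-r z)^2 = -r z := Real.sq_sqrt (by linarith)
          rw [inv_mul_eq_div, le_div_iff₀ hb0]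
          linarith [mul_nonneg (sub_nonneg.mpr hsρ.le)
            (show (0:ℝ) ≤ Real.sqrt (-r z) + ‖w‖ - Real.sqrt ρ₀ by linarith), ha2,
              sq_nonneg ‖w‖]
        calc Metric.infDist ((z, w) : EuclideanSpace ℂ (Fin n) × EuclideanSpace ℂ (Fin k)) Omtᶜ
            ≤ dist ((z, w) : EuclideanSpace ℂ (Fin n) × EuclideanSpace ℂ (Fin k)) (z, w') :=
              Metric.infDist_le_dist_of_mem hexit
          _ = Real.sqrt (-r z) - ‖w‖ := hdist
          _ ≤ (Real.sqrt ρ₀)⁻¹ * (-(r z + ‖w‖^2)) := hfar2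
          _ ≤ C * (-(r z + ‖w‖^2)) := by
              refine mul_le_mul_of_nonneg_right ?_ hrtpos.le
              rw [hCdef]; exact le_trans (le_max_left _ _) (le_max_right _ _)
  -- nonemptiness of the lifted complement
  have hOmtcne : Omtᶜ.Nonempty := by
    refine ⟨(z₀', 0), ?_⟩
    simp only [hOmt, mem_compl_iff, mem_setOf_eq, not_lt]
    have : ¬ r z₀' < 0 := hz₀'
    have h0 : ‖(0 : EuclideanSpace ℂ (Fin k))‖ = 0 := norm_zero
    rw [h0]
    nlinarith [not_lt.mp this]
  -- the upper estimate
  obtain ⟨c₂, hc₂def⟩ : ∃ x : ℝ, x = max M (L₁ + 2*Real.sqrt M + 1) := ⟨_, rfl⟩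
  have hc₂0 : 0 < c₂ := by rw [hc₂def]; exact lt_of_lt_of_le hM0 (le_max_left _ _)
  have hupper : ∀ q ∈ Omt, ∀ q' ∈ Omtᶜ, -(r q.1 + ‖q.2‖^2) ≤ c₂ * dist q q' := by
    rintro ⟨z, w⟩ hq ⟨z', w'⟩ hq'
    simp only [hOmt, mem_setOf_eq] at hq
    simp only [hOmt, mem_compl_iff, mem_setOf_eq, not_lt] at hq'
    show -(r z + ‖w‖^2) ≤ c₂ * dist ((z, w) : EuclideanSpace ℂ (Fin n) × EuclideanSpace ℂ (Fin k)) (z', w')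
    have hzOm : z ∈ Om := by
      simp only [hOm, mem_setOf_eq]
      linarith [sq_nonneg ‖w‖]
    have hρM : -r z ≤ M := hρle z hzOm
    have hwM : ‖w‖ ≤ Real.sqrt M := by
      rw [show ‖w‖ = Real.sqrt (‖w‖^2) from (Real.sqrt_sq (norm_nonneg w)).symm]
      exact Real.sqrt_le_sqrt (by linarith)
    set d := dist ((z, w) : EuclideanSpace ℂ (Fin n) × EuclideanSpace ℂ (Fin k)) (z', w') with hddef
    have hd0 : (0:ℝ) ≤ d := dist_nonneg
    have hdz : dist z z' ≤ d := by rw [hddef, Prod.dist_eq]; exact le_max_left _ _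
    have hdw : dist w w' ≤ d := by rw [hddef, Prod.dist_eq]; exact le_max_right _ _
    rcases le_or_gt 1 d with h1 | h1
    · have h2 : -(r z + ‖w‖^2) ≤ M := by linarith [sq_nonneg ‖w‖]
      calc -(r z + ‖w‖^2) ≤ M := h2
        _ ≤ M * d := le_mul_of_one_le_right hM0.le h1
        _ ≤ c₂ * d := by
          refine mul_le_mul_of_nonneg_right ?_ hd0
          rw [hc₂def]; exact le_max_left _ _
    · have hzB : z ∈ Metric.closedBall (0:EuclideanSpace ℂ (Fin n)) (R+2) := by
        rw [mem_closedBall_zero_iff]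
        linarith [hnormR z hzOm]
      have hez : ‖z' - z‖ = dist z z' := by rw [dist_comm, dist_eq_norm]
      have hz'B : z' ∈ Metric.closedBall (0:EuclideanSpace ℂ (Fin n)) (R+2) := by
        rw [mem_closedBall_zero_iff]
        have h3 : ‖z'‖ - ‖z‖ ≤ ‖z' - z‖ := norm_sub_norm_le _ _
        rw [hez] at h3
        linarith [hnormR z hzOm, hdz]
      have hrz : r z' - r z ≤ L₁ * d := by
        have h4 := hL₁ z hzB z' hz'B
        rw [Real.norm_eq_abs] at h4
        calc r z' - r z ≤ |r z' - r z| := le_abs_self _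
          _ ≤ L₁ * ‖z' - z‖ := h4
          _ = L₁ * dist z z' := by rw [hez]
          _ ≤ L₁ * d := mul_le_mul_of_nonneg_left hdz hL₁0
      have hwd : ‖w'‖ - ‖w‖ ≤ dist w w' := by
        have h5 : ‖w'‖ - ‖w‖ ≤ ‖w' - w‖ := norm_sub_norm_le _ _
        rw [show ‖w' - w‖ = dist w w' from by rw [dist_comm, dist_eq_norm]] at h5
        exact h5
      have hw' : ‖w'‖ ≤ Real.sqrt M + 1 := by linarith [hwM, hdw]
      have hsq : ‖w'‖^2 - ‖w‖^2 ≤ (2*Real.sqrt M + 1) * d := by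
        rcases le_or_gt ‖w'‖ ‖w‖ with hc | hc
        · have h6 : ‖w'‖^2 ≤ ‖w‖^2 := pow_le_pow_left₀ (norm_nonneg w') hc 2
          have h7 : (0:ℝ) ≤ (2*Real.sqrt M + 1) * d := by positivity
          linarith
        · calc ‖w'‖^2 - ‖w‖^2 = (‖w'‖ + ‖w‖) * (‖w'‖ - ‖w‖) := by ring
            _ ≤ (2*Real.sqrt M + 1) * (‖w'‖ - ‖w‖) := by
                refine mul_le_mul_of_nonneg_right (by linarith) (by linarith)
            _ ≤ (2*Real.sqrt M + 1) * d := by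
                refine mul_le_mul_of_nonneg_left (hwd.trans hdw) (by positivity)
      have h8 : -(r z + ‖w‖^2) ≤ (r z' - r z) + (‖w'‖^2 - ‖w‖^2) := by linarith
      calc -(r z + ‖w‖^2) ≤ L₁ * d + (2*Real.sqrt M + 1) * d := by linarith
        _ = (L₁ + 2*Real.sqrt M + 1) * d := by ring
        _ ≤ c₂ * d := by
          refine mul_le_mul_of_nonneg_right ?_ hd0
          rw [hc₂def]; exact le_max_right _ _
  -- conclusion
  refine ⟨C⁻¹, c₂, inv_pos.mpr hC0, hc₂0, ?_⟩
  intro q hq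
  constructor
  · have h1 := hkey q hq
    have h2 : C⁻¹ * Metric.infDist q Omtᶜ ≤ C⁻¹ * (C * (-(r q.1 + ‖q.2‖^2))) :=
      mul_le_mul_of_nonneg_left h1 (inv_pos.mpr hC0).le
    calc C⁻¹ * Metric.infDist q Omtᶜ ≤ C⁻¹ * (C * (-(r q.1 + ‖q.2‖^2))) := h2
      _ = -(r q.1 + ‖q.2‖^2) := by rw [← mul_assoc, inv_mul_cancel₀ hC0.ne', one_mul]
  · have hd : ∀ q' ∈ Omtᶜ, (-(r q.1 + ‖q.2‖^2)) / c₂ ≤ dist q q' := by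
      intro q' hq'
      rw [div_le_iff₀ hc₂0]
      calc -(r q.1 + ‖q.2‖^2) ≤ c₂ * dist q q' := hupper q hq q' hq'
        _ = dist q q' * c₂ := by ring
    have : (-(r q.1 + ‖q.2‖^2)) / c₂ ≤ Metric.infDist q Omtᶜ := by
      by_contra hlt
      push_neg at hlt
      obtain ⟨q', hq', hdq⟩ := (Metric.infDist_lt_iff hOmtcne).mp hlt
      exact absurd (hd q' hq') (not_le.mpr hdq)
    calc -(r q.1 + ‖q.2‖^2) = (-(r q.1 + ‖q.2‖^2)) / c₂ * c₂ := by
          rw [div_mul_cancel₀ _ hc₂0.ne']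
      _ ≤ Metric.infDist q Omtᶜ * c₂ := mul_le_mul_of_nonneg_right this hc₂0.le
      _ = c₂ * Metric.infDist q Omtᶜ := by ring
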